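/- Fix an integer d ≥ 1, a point x ∈ ℝ^d with x ≠ 0, and a real number a > 0. Then ψ_λ(x) → 0 uniformly on the strip Ω_a = {λ ∈ ℂ : |Im λ| ≤ a} as |λ| → ∞; that is, for every ε > 0 there exists R > 0 such that |ψ_λ(x)| < ε for every λ ∈ Ω_a with |λ| ≥ R. -/

import Mathlib

open MeasureTheory Complex
open scoped ENNReal

/-- `ψ_λ(ξ) = |B(0,1)|⁻¹ ∫_{B(0,1)} e^{-iλ ξ·y} dy`. -/
noncomputable def psiFn (d : ℕ) (lam : ℂ) (ξ : EuclideanSpace ℝ (Fin d)) : ℂ :=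
  (((volume (Metric.ball (0 : EuclideanSpace ℝ (Fin d)) 1)).toReal : ℂ))⁻¹ *
    ∫ y in Metric.ball (0 : EuclideanSpace ℝ (Fin d)) 1,
      Complex.exp (-(Complex.I * lam * ((inner ℝ ξ y : ℝ) : ℂ)))

/-!
Write `λ = σ + iτ`. The integrand factors as `e^{-iσ⟨x,y⟩} e^{τ⟨x,y⟩}`, so for fixed `τ` the
integral over the ball is the Fourier transform of `1_B e^{τ⟨x,·⟩}` at `σx/2π`, which tends to `0`
as `|σ| → ∞` by the Riemann–Lebesgue lemma. Because the phase `e^{-iσ⟨x,y⟩}` has modulus one, the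
functions `τ ↦ ψ_{σ+iτ}(x)`, `σ ∈ ℝ`, form an equicontinuous family, so by Ascoli the convergence
is uniform for `τ` in the compact interval `[-a, a]`. On the strip, `|λ| → ∞` forces `|σ| → ∞`.
-/

open Filter Metric Topology Set
open scoped Real InnerProductSpace FourierTransform

theorem EquicontinuousOn.tendstoUniformlyOn_of_tendsto {ι X α : Type*} [TopologicalSpace X]
    [UniformSpace α] {F : ι → X → α} {f : X → α} {K : Set X} {l : Filter ι}
    (hK : IsCompact K) (hF : EquicontinuousOn F K) (h : ∀ x ∈ K, Tendsto (F · x) l (𝓝 (f x))) :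
    TendstoUniformlyOn F f l K := by
  have := isCompact_iff_compactSpace.mp hK
  rw [tendstoUniformlyOn_iff_tendstoUniformly_comp_coe]
  exact UniformFun.tendsto_iff_tendstoUniformly.mp <|
    (((equicontinuous_restrict_iff F).mpr hF).tendsto_uniformFun_iff_pi l _).mpr <|
      tendsto_pi_nhds.mpr fun x => h x x.2

theorem equicontinuous_setIntegral_mul_of_norm_le_one {X V ι : Type*} [TopologicalSpace X]
    [FirstCountableTopology X] [LocallyCompactSpace X] [MetricSpace V] [ProperSpace V]
    [MeasurableSpace V] [OpensMeasurableSpace V] {μ : Measure V} [IsLocallyFiniteMeasure μ]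
    {s : Set V} (hs : Bornology.IsBounded s) {g : X → V → ℂ} (hg : Continuous g.uncurry)
    {u : ι → V → ℂ} (hu : ∀ i, AEStronglyMeasurable (u i) (μ.restrict s))
    (hu_le : ∀ i y, ‖u i y‖ ≤ 1) :
    Equicontinuous fun i t => ∫ y in s, u i y * g t y ∂μ := by
  have hint : ∀ t i, IntegrableOn (fun y => u i y * g t y) s μ := fun t i =>
    ((hg.comp (Continuous.prodMk_right t)).continuousOn.integrableOn_compact
      hs.isCompact_closure |>.mono_set subset_closure).bdd_mul (hu i)
      (Eventually.of_forall (hu_le i))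
  intro t₀
  -- integrating over the compact closure of `s` makes the modulus continuous in `t`
  refine Metric.equicontinuousAt_of_continuity_modulus
    (fun t => ∫ y in closure s, ‖g t₀ y - g t y‖ ∂μ) ?_ _ (Eventually.of_forall fun t i => ?_)
  · have hb : Continuous fun t => ∫ y in closure s, ‖g t₀ y - g t y‖ ∂μ :=
      continuous_parametric_integral_of_continuous (by fun_prop) hs.isCompact_closure
    simpa using hb.tendsto t₀
  · have hdiff : IntegrableOn (fun y => ‖g t₀ y - g t y‖) (closure s) μ :=
      ContinuousOn.integrableOn_compact hs.isCompact_closure (by fun_prop)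
    calc dist (∫ y in s, u i y * g t₀ y ∂μ) (∫ y in s, u i y * g t y ∂μ)
        = ‖∫ y in s, u i y * (g t₀ y - g t y) ∂μ‖ := by
          simp_rw [dist_eq_norm, ← integral_sub (hint t₀ i) (hint t i), mul_sub]
      _ ≤ ∫ y in s, ‖g t₀ y - g t y‖ ∂μ :=
          norm_integral_le_of_norm_le (hdiff.mono_set subset_closure) <|
            Eventually.of_forall fun y => by
              simpa [norm_mul] using mul_le_of_le_one_left (norm_nonneg _) (hu_le i y)
      _ ≤ ∫ y in closure s, ‖g t₀ y - g t y‖ ∂μ :=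
          setIntegral_mono_set hdiff (Eventually.of_forall fun _ => norm_nonneg _)
            subset_closure.eventuallyLE

section InnerProductSpace

variable {V : Type*} [NormedAddCommGroup V] [InnerProductSpace ℝ V] [FiniteDimensional ℝ V]
  [MeasurableSpace V] [BorelSpace V]

theorem tendsto_setIntegral_exp_inner_mul_cocompact
    {s : Set V} (hs : MeasurableSet s) {x : V} (hx : x ≠ 0) (f : V → ℂ) :
    Tendsto (fun σ : ℝ => ∫ y in s, cexp (-(I * σ * ⟪x, y⟫_ℝ)) * f y) (cocompact ℝ) (𝓝 0) := by
  have hx' : (2 * π)⁻¹ • x ≠ 0 := smul_ne_zero (by positivity) hx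
  refine ((tendsto_integral_exp_inner_smul_cocompact (s.indicator f)).comp
    (isClosedEmbedding_smul_left hx').tendsto_cocompact).congr fun σ => ?_
  have hphase : ∀ y, (𝐞 (-⟪y, σ • (2 * π)⁻¹ • x⟫_ℝ) : ℂ) = cexp (-(I * σ * ⟪x, y⟫_ℝ)) := by
    intro y
    rw [Real.fourierChar_apply, inner_smul_right, inner_smul_right, real_inner_comm]
    push_cast
    congr 1
    field_simp
  simp_rw [Function.comp_apply, ← integral_indicator hs, Circle.smul_def, hphase,
    indicator_mul_right, smul_eq_mul]

theorem tendstoUniformlyOn_setIntegral_exp_inner_cocompact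
    {s : Set V} (hs : MeasurableSet s) (hs_bdd : Bornology.IsBounded s) {x : V} (hx : x ≠ 0)
    {K : Set ℝ} (hK : IsCompact K) :
    TendstoUniformlyOn (fun σ τ : ℝ => ∫ y in s, cexp (-(I * (σ + τ * I) * ⟪x, y⟫_ℝ))) 0
      (cocompact ℝ) K := by
  have hsplit : ∀ σ τ : ℝ, ∀ y, cexp (-(I * (σ + τ * I) * ⟪x, y⟫_ℝ)) =
      cexp (-(I * σ * ⟪x, y⟫_ℝ)) * cexp (τ * ⟪x, y⟫_ℝ) := by
    intro σ τ y
    rw [← Complex.exp_add]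
    ring_nf
    simp [I_sq]
  have hphase : ∀ (σ : ℝ) y, ‖cexp (-(I * σ * ⟪x, y⟫_ℝ))‖ = 1 := by
    intro σ y
    rw [← norm_exp_ofReal_mul_I (-(σ * ⟪x, y⟫_ℝ))]
    push_cast
    ring_nf
  simp_rw [hsplit]
  refine EquicontinuousOn.tendstoUniformlyOn_of_tendsto hK ?_
    fun τ _ => tendsto_setIntegral_exp_inner_mul_cocompact hs hx _
  exact (equicontinuous_setIntegral_mul_of_norm_le_one hs_bdd (by fun_prop)
    (fun σ => (by fun_prop : Continuous _).aestronglyMeasurable)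
    (fun σ y => (hphase σ y).le)).equicontinuousOn K

end InnerProductSpace

theorem tendstoUniformlyOn_psiFn {d : ℕ} {x : EuclideanSpace ℝ (Fin d)} (hx : x ≠ 0) {K : Set ℝ}
    (hK : IsCompact K) :
    TendstoUniformlyOn (fun σ τ : ℝ => psiFn d (σ + τ * I) x) 0 (cocompact ℝ) K := by
  unfold psiFn
  simpa only [Function.comp_def, Pi.zero_def, mul_zero] using
    (uniformContinuous_mul_left' _).comp_tendstoUniformlyOn
    (tendstoUniformlyOn_setIntegral_exp_inner_cocompact measurableSet_ball isBounded_ball hx hK)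

theorem statement4_general (d : ℕ) (x : EuclideanSpace ℝ (Fin d)) (hx : x ≠ 0)
    (a : ℝ) :
    ∀ ε : ℝ, 0 < ε → ∃ R : ℝ, 0 < R ∧
      ∀ lam : ℂ, |lam.im| ≤ a → R ≤ ‖lam‖ → ‖psiFn d lam x‖ < ε := by
  intro ε hε
  have hunif := Metric.tendstoUniformlyOn_iff.mp
    (tendstoUniformlyOn_psiFn hx (isCompact_Icc (a := -a) (b := a))) ε hε
  rw [← cobounded_eq_cocompact] at hunif
  obtain ⟨S, -, hS⟩ := hasBasis_cobounded_norm.eventually_iff.mp hunif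
  refine ⟨max S 0 + |a| + 1, by positivity, fun lam him hlam => ?_⟩
  have hre : S ≤ ‖lam.re‖ := by
    have hnorm := norm_le_abs_re_add_abs_im lam
    have him' := him.trans (le_abs_self a)
    rw [Real.norm_eq_abs]
    linarith [le_max_left S 0]
  simpa [re_add_im] using hS hre lam.im (abs_le.mp him)

/-- For fixed `x ≠ 0` and `a > 0`, `ψ_λ(x) → 0` uniformly on the strip `|Im λ| ≤ a`
as `|λ| → ∞`. -/
theorem statement4 (d : ℕ) (hd : 1 ≤ d) (x : EuclideanSpace ℝ (Fin d)) (hx : x ≠ 0)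
    (a : ℝ) (ha : 0 < a) :
    ∀ ε : ℝ, 0 < ε → ∃ R : ℝ, 0 < R ∧
      ∀ lam : ℂ, |lam.im| ≤ a → R ≤ ‖lam‖ → ‖psiFn d lam x‖ < ε :=
  statement4_general d x hx a
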